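/- Let O ⊆ ℂⁿ be a connected open set, V₁,…,Vₙ : O → ℂⁿ holomorphic maps with V₁(q),…,Vₙ(q) a basis of ℂⁿ for every q ∈ O, h₁,…,h_{m+1} holomorphic functions on O (m ≥ n ≥ 1), and α¹,…,α^m multi-indices with |α^i| ≤ l (l ≥ 1), satisfying: (i) det(Λ^{α^i}h_j)_{1≤i,j≤m} ≠ 0 at every point of O; (ii) for every multi-index β with |β| ≤ l+1, the (m+1)×(m+1) determinant with rows (Λ^{α^i}h₁,…,Λ^{α^i}h_{m+1}), i = 1,…,m, and (Λ^βh₁,…,Λ^βh_{m+1}) vanishes identically on O. For each i₀ ∈ {1,…,m}, with (i₁,…,i_{m−1}) the increasing enumeration of {1,…,m}∖{i₀}, let c_{i₀} ∈ ℂ be the (constant) value on O of det(Λ^{α^i}h_{i₁},…,Λ^{α^i}h_{i_{m−1}}, Λ^{α^i}h_{m+1})_{i=1,…,m} ⁄ det(Λ^{α^i}h_{i₁},…,Λ^{α^i}h_{i_{m−1}}, Λ^{α^i}h_{i₀})_{i=1,…,m}. Then for every choice 1 ≤ i₁ < ⋯ < i_{m−1} ≤ m, the determinant det(Λ^{α^i}h_{i₁},…,Λ^{α^i}h_{i_{m−1}},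 Λ^{α^i}(h_{m+1} − Σ_{t=1}^m c_t h_t))_{i=1,…,m} vanishes identically on O. -/

import Mathlib

open scoped BigOperators

noncomputable section

/-- The derivative of `f` along the holomorphic vector field `V_j`:
`(Λ_j f)(q) = Df(q)[V_j(q)]`. -/
def LamV {n : ℕ} (V : Fin n → (Fin n → ℂ) → (Fin n → ℂ)) (j : Fin n)
    (f : (Fin n → ℂ) → ℂ) : (Fin n → ℂ) → ℂ :=
  fun q => fderiv ℂ f q (V j q)

/-- `Λ^α = Λ_1^{α_1} ∘ ⋯ ∘ Λ_n^{α_n}` for a multi-index `α`. -/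
def LamVMulti {n : ℕ} (V : Fin n → (Fin n → ℂ) → (Fin n → ℂ)) (α : Fin n → ℕ)
    (f : (Fin n → ℂ) → ℂ) : (Fin n → ℂ) → ℂ :=
  (List.finRange n).foldr (fun j g => (LamV V j)^[α j] g) f

/-- The `j`-th element (in increasing order) of `{0,…,m−1} \ {i₀}`. -/
def compIdx {m : ℕ} (i₀ : Fin m) (j : ℕ) (hj : j + 1 < m) : Fin m :=
  if j < (i₀ : ℕ) then ⟨j, Nat.lt_of_succ_lt hj⟩ else ⟨j + 1, hj⟩

/-!
Taking `β = 0` in (ii), the `(m+1) × (m+1)` determinant whose first `m` rows are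
`(Λ^{αⁱ}h_j)_j` and whose last row is `(h_j(q))_j` vanishes at every `q ∈ O`. By Cramer's rule,
(i) and the defining relations of the `c_t` say that `c` solves `A c = b`, where
`A = (Λ^{αⁱ}h_t)_{i,t ≤ m}` and `b = (Λ^{αⁱ}h_{m+1})_i`. Subtracting `∑ c_t · (column t)` from the
last column therefore leaves the single entry `h_{m+1}(q) - ∑ c_t h_t(q)`, so this value times
`det A ≠ 0` is zero. The corrected function thus vanishes on the open set `O`, together with all
its `Λ`-derivatives, and the determinant in question has a zero column.
-/

open Filter Topology
open scoped Matrix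

namespace Matrix

variable {R : Type*} [CommRing R]

theorem det_eq_mul_det_of_det_submatrix_id_eq_mul {ι : Type*} [Fintype ι] [DecidableEq ι]
    {M N : Matrix ι ι R} {f : ι → ι} (hf : f.Injective) {r : R}
    (h : (M.submatrix id f).det = r * (N.submatrix id f).det) : M.det = r * N.det := by
  set σ : Equiv.Perm ι := Equiv.ofBijective f hf.bijective_of_finite
  rw [show f = σ from rfl, det_permute', det_permute', mul_left_comm] at h
  exact ((Equiv.Perm.sign σ).isUnit.map (Int.castRingHom R)).mul_left_cancel h

theorem mulVec_eq_of_det_updateCol_eq_mul [IsDomain R] {ι : Type*} [Fintype ι]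
    [DecidableEq ι] {A : Matrix ι ι R} {b c : ι → R} (hA : A.det ≠ 0)
    (h : ∀ i, (A.updateCol i b).det = c i * A.det) : A *ᵥ c = b := by
  have hcramer : A.cramer b = A.det • c := funext fun i => by
    rw [cramer_apply, h, Pi.smul_apply, smul_eq_mul, mul_comm]
  have := mulVec_cramer A b
  rw [hcramer, mulVec_smul] at this
  exact smul_right_injective _ hA this

theorem det_updateCol_last_single {m : ℕ} (M : Matrix (Fin (m + 1)) (Fin (m + 1)) R) (d : R) :
    (M.updateCol (Fin.last m) (Pi.single (Fin.last m) d)).det =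
      d * (M.submatrix Fin.castSucc Fin.castSucc).det := by
  rw [det_succ_column _ (Fin.last m), Fintype.sum_eq_single (Fin.last m)]
  · rw [submatrix_updateCol_succAbove]
    simp [Fin.succAbove_last, ← two_mul, pow_mul]
  · intro i hi
    simp [hi]

theorem det_eq_mul_det_submatrix_castSucc {m : ℕ} (M : Matrix (Fin (m + 1)) (Fin (m + 1)) R)
    (c : Fin m → R)
    (hc : M.submatrix Fin.castSucc Fin.castSucc *ᵥ c = fun i => M i.castSucc (Fin.last m)) :
    M.det = (M (Fin.last m) (Fin.last m) - (fun t => M (Fin.last m) t.castSucc) ⬝ᵥ c) *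
      (M.submatrix Fin.castSucc Fin.castSucc).det := by
  set d := M (Fin.last m) (Fin.last m) - (fun t => M (Fin.last m) t.castSucc) ⬝ᵥ c
  set M' := M.updateCol (Fin.last m) (Pi.single (Fin.last m) d)
  -- `M` is recovered from `M'` by adding `∑ t, c t • (column t)` to the last column.
  have hM : M = M'.updateCol (Fin.last m)
      fun k => ∑ i, (Fin.snoc c 1 : Fin (m + 1) → R) i • M' k i := by
    ext k j
    rcases Fin.eq_castSucc_or_eq_last j with ⟨j, rfl⟩ | rfl
    · simp [M']
    rw [updateCol_self, Fin.sum_univ_castSucc]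
    rcases Fin.eq_castSucc_or_eq_last k with ⟨k, rfl⟩ | rfl
    · simpa [M', updateCol_ne (Fin.castSucc_ne_last _), mulVec, dotProduct, mul_comm] using
        (congrFun hc k).symm
    · simp [M', d, dotProduct, mul_comm]
  calc M.det = M'.det := by rw [hM, det_updateCol_sum, Fin.snoc_last, one_smul]
    _ = _ := det_updateCol_last_single M d

end Matrix

theorem compIdx_ne {m : ℕ} (i₀ : Fin m) (j : ℕ) (hj : j + 1 < m) :
    compIdx i₀ j hj ≠ i₀ := by
  unfold compIdx
  split_ifs <;> simp [Fin.ext_iff] <;> omega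

theorem injective_compIdx_or_self {m : ℕ} (i₀ : Fin m) :
    Function.Injective fun j : Fin m =>
      if hj : (j : ℕ) < m - 1 then compIdx i₀ j (by omega) else i₀ := by
  intro j₁ j₂ hj
  simp only [compIdx] at hj
  rw [Fin.ext_iff] at hj ⊢
  split_ifs at hj <;> simp only at hj <;> omega

theorem Matrix.det_updateCol_eq_mul_of_compIdx {R : Type*} [CommRing R] {m : ℕ}
    (A : Matrix (Fin m) (Fin m) R) (b : Fin m → R) (i₀ : Fin m) {r : R}
    (h : (Matrix.of fun i j : Fin m =>
        if hj : (j : ℕ) < m - 1 then A i (compIdx i₀ j (by omega)) else b i).det =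
      r * (Matrix.of fun i j : Fin m =>
        if hj : (j : ℕ) < m - 1 then A i (compIdx i₀ j (by omega)) else A i i₀).det) :
    (A.updateCol i₀ b).det = r * A.det := by
  refine det_eq_mul_det_of_det_submatrix_id_eq_mul (injective_compIdx_or_self i₀) ?_
  convert h using 3 <;> ext i j <;> simp only [submatrix_apply, of_apply, id_eq] <;>
    split_ifs <;> simp [updateCol_ne, compIdx_ne]

section LamV

variable {n : ℕ} {V : Fin n → (Fin n → ℂ) → (Fin n → ℂ)} {f g : (Fin n → ℂ) → ℂ}
  {q : Fin n → ℂ}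

theorem Filter.EventuallyEq.lamV (hfg : f =ᶠ[𝓝 q] g) (j : Fin n) :
    LamV V j f =ᶠ[𝓝 q] LamV V j g :=
  (hfg.fderiv (𝕜 := ℂ)).mono fun x hx => by simp only [LamV, hx]

theorem Filter.EventuallyEq.iterate_lamV (hfg : f =ᶠ[𝓝 q] g) (j : Fin n) (k : ℕ) :
    (LamV V j)^[k] f =ᶠ[𝓝 q] (LamV V j)^[k] g := by
  induction k with
  | zero => exact hfg
  | succ k ih => simpa only [Function.iterate_succ_apply'] using ih.lamV j

theorem Filter.EventuallyEq.lamVMulti (hfg : f =ᶠ[𝓝 q] g) (β : Fin n → ℕ) :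
    LamVMulti V β f =ᶠ[𝓝 q] LamVMulti V β g := by
  unfold LamVMulti
  induction List.finRange n with
  | nil => exact hfg
  | cons j L ih => exact ih.iterate_lamV j (β j)

theorem lamVMulti_zero_fun (β : Fin n → ℕ) : LamVMulti V β 0 = 0 := by
  have hLamV : ∀ j, LamV V j 0 = 0 := fun j => funext fun q => by simp [LamV]
  unfold LamVMulti
  induction List.finRange n with
  | nil => rfl
  | cons j L ih => simpa only [List.foldr_cons, ih] using Function.iterate_fixed (hLamV j) (β j)

theorem lamVMulti_zero (f : (Fin n → ℂ) → ℂ) : LamVMulti V 0 f = f := by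
  simp [LamVMulti]

end LamV

/-- **Lemma 6.4.** Under the hypotheses of Lemma 6.3, let `c_{i₀}` be the constant
value of the quotient
`det(Λ^{αⁱ}h_{i₁},…,Λ^{αⁱ}h_{i_{m−1}},Λ^{αⁱ}h_{m+1}) /
 det(Λ^{αⁱ}h_{i₁},…,Λ^{αⁱ}h_{i_{m−1}},Λ^{αⁱ}h_{i₀})` on `O`, where `(i₁,…,i_{m−1})`
enumerates `{1,…,m} \ {i₀}` increasingly. Then for every selection
`i₁ < ⋯ < i_{m−1}` from `{1,…,m}`, the determinant
`det(Λ^{αⁱ}h_{i₁},…,Λ^{αⁱ}h_{i_{m−1}},Λ^{αⁱ}(h_{m+1} − ∑_t c_t h_t))` vanishes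
identically on `O`. -/
theorem determinant_with_corrected_column_vanishes
    (n m l : ℕ) (hn : 1 ≤ n) (hnm : n ≤ m)
    (O : Set (Fin n → ℂ)) (hOopen : IsOpen O)
    (V : Fin n → (Fin n → ℂ) → (Fin n → ℂ))
    (h : Fin (m + 1) → (Fin n → ℂ) → ℂ)
    (α : Fin m → Fin n → ℕ)
    (hi : ∀ q ∈ O,
      (Matrix.of fun i j : Fin m => LamVMulti V (α i) (h j.castSucc) q).det ≠ 0)
    (hii : ∀ β : Fin n → ℕ, (∑ j, β j) ≤ l + 1 → ∀ q ∈ O,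
      (Matrix.of fun i j : Fin (m + 1) =>
        if hi' : (i : ℕ) < m then LamVMulti V (α ⟨i, hi'⟩) (h j) q
        else LamVMulti V β (h j) q).det = 0)
    (c : Fin m → ℂ)
    (hc : ∀ i₀ : Fin m, ∀ q ∈ O,
      (Matrix.of fun i j : Fin m =>
        if hj : (j : ℕ) < m - 1 then
          LamVMulti V (α i) (h (compIdx i₀ j (by omega)).castSucc) q
        else LamVMulti V (α i) (h (Fin.last m)) q).det
      = c i₀ *
        (Matrix.of fun i j : Fin m =>
          if hj : (j : ℕ) < m - 1 then
            LamVMulti V (α i) (h (compIdx i₀ j (by omega)).castSucc) q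
          else LamVMulti V (α i) (h i₀.castSucc) q).det) :
    ∀ (e : Fin (m - 1) → Fin m), StrictMono e → ∀ q ∈ O,
      (Matrix.of fun i j : Fin m =>
        if hj : (j : ℕ) < m - 1 then LamVMulti V (α i) (h (e ⟨j, hj⟩).castSucc) q
        else LamVMulti V (α i)
          (fun x => h (Fin.last m) x - ∑ t : Fin m, c t * h t.castSucc x) q).det = 0 := by
  have hcorrected : ∀ q ∈ O, h (Fin.last m) q - ∑ t, c t * h t.castSucc q = 0 := by
    intro q hq
    set A : Matrix (Fin m) (Fin m) ℂ := .of fun i t => LamVMulti V (α i) (h t.castSucc) q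
    have hAc : A *ᵥ c = fun i => LamVMulti V (α i) (h (Fin.last m)) q :=
      Matrix.mulVec_eq_of_det_updateCol_eq_mul (hi q hq) fun i₀ =>
        A.det_updateCol_eq_mul_of_compIdx _ i₀ (hc i₀ q hq)
    set M : Matrix (Fin (m + 1)) (Fin (m + 1)) ℂ := .of fun i j =>
      if hi' : (i : ℕ) < m then LamVMulti V (α ⟨i, hi'⟩) (h j) q else LamVMulti V 0 (h j) q
    have hMA : M.submatrix Fin.castSucc Fin.castSucc = A := by
      ext
      simp [M, A]
    have hdet : M.det = 0 := hii 0 (by simp) q hq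
    rw [M.det_eq_mul_det_submatrix_castSucc c (by rw [hMA, hAc]; ext; simp [M]), hMA] at hdet
    simpa [M, lamVMulti_zero, dotProduct, mul_comm, sub_eq_zero] using
      (mul_eq_zero.mp hdet).resolve_right (hi q hq)
  intro e _ q hq
  refine Matrix.det_eq_zero_of_column_eq_zero ⟨m - 1, by omega⟩ fun i => ?_
  have hq0 : (fun x => h (Fin.last m) x - ∑ t, c t * h t.castSucc x) =ᶠ[𝓝 q] 0 :=
    Filter.eventually_of_mem (hOopen.mem_nhds hq) hcorrected
  simpa using (hq0.lamVMulti (α i)).eq_of_nhds.trans (congrFun (lamVMulti_zero_fun _) q)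

end
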